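/- Let n ≥ 2, let U ⊆ ℝⁿ ∖ {0} be open and let I(U) = { x ∈ ℝⁿ ∖ {0} : x/|x|² ∈ U } be its image under Euclidean inversion. If g ∈ C¹(U, ℝ_n), then for every x ∈ I(U): D_x( (x/|x|ⁿ) · g(x/|x|²) ) = −(x/|x|^{n+2}) · (Dg)(x/|x|²), where x is regarded as the Clifford vector Σ_j x_j e_j and the products are Clifford products. In particular, if Dg = 0 on U, then x ↦ (x/|x|ⁿ) g(x/|x|²) is left monogenic on I(U). -/

import Mathlib

open scoped BigOperators
open MeasureTheory

noncomputable section

/-- The real Clifford algebra `ℝ_n`, realized concretely as the space of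
coefficient families indexed by subsets `A ⊆ {1,…,n}` (the standard basis `e_A`). -/
abbrev Cl (n : ℕ) : Type := Finset (Fin n) → ℝ

namespace Cliff

variable {n : ℕ}

/-- The sign occurring in `e_A * e_B = csign A B • e_{A ∆ B}` for the Clifford algebra
with relations `e_j ^ 2 = -1` and `e_j e_k = - e_k e_j` (`j ≠ k`). -/
def csign (A B : Finset (Fin n)) : ℝ :=
  (-1 : ℝ) ^ ((((A ×ˢ B).filter fun p => p.2 < p.1)).card + (A ∩ B).card)

/-- The Clifford product on `ℝ_n`. -/
def cmul (f g : Cl n) : Cl n :=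
  fun C => ∑ A : Finset (Fin n), csign A (symmDiff A C) * f A * g (symmDiff A C)

/-- The unit `1` of `ℝ_n`. -/
def cone : Cl n := fun A => if A = (∅ : Finset (Fin n)) then 1 else 0

/-- The generator `e_j`. -/
def e (j : Fin n) : Cl n := fun A => if A = {j} then 1 else 0

/-- Clifford conjugation: the anti-automorphism with `1̄ = 1` and `ē_j = -e_j`;
on the basis, `conj e_A = (-1)^(|A|(|A|+1)/2) e_A`. -/
def conj (f : Cl n) : Cl n :=
  fun A => (-1 : ℝ) ^ (A.card * (A.card + 1) / 2) * f A

/-- Scalar part `Re f = f_∅`. -/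
def re (f : Cl n) : ℝ := f ∅

/-- Squared norm `|f|² = Σ_A f_A²`. -/
def normSq (f : Cl n) : ℝ := ∑ A : Finset (Fin n), (f A) ^ 2

/-- Embedding of a Euclidean vector as the Clifford vector `x = Σ_j x_j e_j`. -/
def vec (x : Fin n → ℝ) : Cl n := ∑ j : Fin n, x j • e j

/-- Embedding of a real scalar into `ℝ_n`. -/
def scal (a : ℝ) : Cl n := a • cone

/-- The Euclidean norm `|x|` of a point of `ℝⁿ`. -/
def nrm (x : Fin n → ℝ) : ℝ := Real.sqrt (∑ j : Fin n, (x j) ^ 2)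

/-- `j`-th partial derivative of a Clifford-valued function. -/
def pd (j : Fin n) (u : (Fin n → ℝ) → Cl n) (x : Fin n → ℝ) : Cl n :=
  fderiv ℝ u x (Pi.single j 1)

/-- The Dirac operator `Du = Σ_j e_j ∂_j u`. -/
def Dirac (u : (Fin n → ℝ) → Cl n) : (Fin n → ℝ) → Cl n :=
  fun x => ∑ j : Fin n, cmul (e j) (pd j u x)

/-- `j`-th partial derivative of a scalar function. -/
def pds (j : Fin n) (φ : (Fin n → ℝ) → ℝ) (x : Fin n → ℝ) : ℝ :=
  fderiv ℝ φ x (Pi.single j 1)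

/-- `Dφ = Σ_j (∂_j φ) e_j` as a Clifford vector. -/
def Dgrad (φ : (Fin n → ℝ) → ℝ) (x : Fin n → ℝ) : Cl n :=
  vec (fun j => pds j φ x)

/-- Laplacian of a scalar function, `Δφ = Σ_j ∂_j² φ`. -/
def lap (φ : (Fin n → ℝ) → ℝ) (x : Fin n → ℝ) : ℝ :=
  ∑ j : Fin n, pds j (pds j φ) x

/-- Componentwise Laplacian of a Clifford-valued function. -/
def clap (u : (Fin n → ℝ) → Cl n) (x : Fin n → ℝ) : Cl n :=
  ∑ j : Fin n, pd j (pd j u) x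

/-- `|∇φ|² = Σ_j (∂_j φ)²`. -/
def gradSq (φ : (Fin n → ℝ) → ℝ) (x : Fin n → ℝ) : ℝ :=
  ∑ j : Fin n, (pds j φ x) ^ 2

/-- The formal adjoint `δ_φ u = Du - (Dφ)u` of the Dirac operator. -/
def delta (φ : (Fin n → ℝ) → ℝ) (u : (Fin n → ℝ) → Cl n) : (Fin n → ℝ) → Cl n :=
  fun x => Dirac u x - cmul (Dgrad φ x) (u x)

/-- `u ∈ C_c^∞(Ω, ℝ_n)`: a smooth compactly supported function with support in `Ω`. -/
def IsTest (Ω : Set (Fin n → ℝ)) (u : (Fin n → ℝ) → Cl n) : Prop :=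
  ContDiff ℝ (⊤ : ℕ∞) u ∧ HasCompactSupport u ∧ tsupport u ⊆ Ω

/-- Squared weighted L² norm `‖u‖²_φ = ∫_Ω |u|² e^{-φ} dV`. -/
def wnorm (Ω : Set (Fin n → ℝ)) (φ : (Fin n → ℝ) → ℝ) (u : (Fin n → ℝ) → Cl n) : ℝ :=
  ∫ x in Ω, normSq (u x) * Real.exp (-φ x)

/-- Weighted inner product `⟨u, v⟩_φ = ∫_Ω Re(u v̄) e^{-φ} dV`. -/
def wip (Ω : Set (Fin n → ℝ)) (φ : (Fin n → ℝ) → ℝ)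
    (u v : (Fin n → ℝ) → Cl n) : ℝ :=
  ∫ x in Ω, re (cmul (u x) (conj (v x))) * Real.exp (-φ x)

/-- Membership in `L²_φ(Ω, ℝ_n)`. -/
def MemL2 (Ω : Set (Fin n → ℝ)) (φ : (Fin n → ℝ) → ℝ) (u : (Fin n → ℝ) → Cl n) : Prop :=
  AEStronglyMeasurable u (volume.restrict Ω) ∧
    IntegrableOn (fun x => normSq (u x) * Real.exp (-φ x)) Ω

/-- `Du = f` in the sense of distributions on `Ω`:
`⟨f, v⟩_0 = ⟨u, Dv⟩_0` for all test functions `v`. -/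
def DistDirac (Ω : Set (Fin n → ℝ)) (u f : (Fin n → ℝ) → Cl n) : Prop :=
  ∀ v : (Fin n → ℝ) → Cl n, IsTest Ω v → wip Ω 0 f v = wip Ω 0 u (Dirac v)

/-- `Δu = f` in the sense of distributions on `Ω`. -/
def DistLap (Ω : Set (Fin n → ℝ)) (u f : (Fin n → ℝ) → Cl n) : Prop :=
  ∀ v : (Fin n → ℝ) → Cl n, IsTest Ω v → wip Ω 0 f v = wip Ω 0 u (clap v)

/-- A domain: a connected open set. -/
def IsDomain (Ω : Set (Fin n → ℝ)) : Prop := IsOpen Ω ∧ IsConnected Ω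

end Cliff

/-! Write the Kelvin transform as `K = |x|⁻ⁿ • (x h)` with `h = g ∘ ι`, `ι x = x / |x|²`, and put
`G = dg(ι x) x`. The relations `e_j e_k + e_k e_j = -2 δ_jk` give the Leibniz rule
`D(x h) = -n h - x Dh - 2 (x·∇) h`. The differential of `ι` is `v ↦ |x|⁻² v - 2 ⟨x, v⟩ |x|⁻⁴ x`,
so `Dh = |x|⁻² (Dg)(ι x) - 2 |x|⁻⁴ x G`, and `(x·∇) h = -|x|⁻² G` because `ι` is homogeneous of
degree `-1`. As `x x = -|x|²`, the two `G` terms cancel and `D(x h) = -n h - |x|⁻² x (Dg)(ι x)`.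
Finally `D|x|⁻ⁿ = -n |x|⁻ⁿ⁻² x` contributes `n |x|⁻ⁿ h`, which cancels `-n h`. -/

namespace Cliff

open Finset

variable {n : ℕ}

lemma cmul_add_left (f₁ f₂ g : Cl n) : cmul (f₁ + f₂) g = cmul f₁ g + cmul f₂ g := by
  funext C
  simp only [cmul, Pi.add_apply, ← sum_add_distrib]
  exact sum_congr rfl fun A _ => by ring

lemma cmul_smul_left (a : ℝ) (f g : Cl n) : cmul (a • f) g = a • cmul f g := by
  funext C
  simp only [cmul, Pi.smul_apply, smul_eq_mul, mul_sum]
  exact sum_congr rfl fun A _ => by ring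

lemma cmul_add_right (f g₁ g₂ : Cl n) : cmul f (g₁ + g₂) = cmul f g₁ + cmul f g₂ := by
  funext C
  simp only [cmul, Pi.add_apply, ← sum_add_distrib]
  exact sum_congr rfl fun A _ => by ring

lemma cmul_smul_right (a : ℝ) (f g : Cl n) : cmul f (a • g) = a • cmul f g := by
  funext C
  simp only [cmul, Pi.smul_apply, smul_eq_mul, mul_sum]
  exact sum_congr rfl fun A _ => by ring

def cmulL : Cl n →L[ℝ] Cl n →L[ℝ] Cl n :=
  LinearMap.toContinuousLinearMap <| LinearMap.toContinuousLinearMap.toLinearMap ∘ₗ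
    LinearMap.mk₂ ℝ cmul cmul_add_left cmul_smul_left cmul_add_right cmul_smul_right

@[simp] lemma cmulL_apply (f g : Cl n) : cmulL f g = cmul f g := rfl

lemma cmul_sum_left {ι : Type*} (s : Finset ι) (f : ι → Cl n) (g : Cl n) :
    cmul (∑ i ∈ s, f i) g = ∑ i ∈ s, cmul (f i) g := by
  change cmulL _ g = _
  rw [map_sum, _root_.sum_apply]
  rfl

lemma cmul_sum_right {ι : Type*} (s : Finset ι) (f : Cl n) (g : ι → Cl n) :
    cmul f (∑ i ∈ s, g i) = ∑ i ∈ s, cmul f (g i) :=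
  map_sum (cmulL f) g s

lemma cmul_vec_left (x : Fin n → ℝ) (f : Cl n) :
    cmul (vec x) f = ∑ j, x j • cmul (e j) f := by
  simp only [vec, cmul_sum_left, cmul_smul_left]

def eSign (j : Fin n) (C : Finset (Fin n)) : ℝ := csign {j} (symmDiff {j} C)

lemma cmul_e_apply (j : Fin n) (f : Cl n) (C : Finset (Fin n)) :
    cmul (e j) f C = eSign j C * f (symmDiff {j} C) := by
  rw [cmul, sum_eq_single ({j} : Finset (Fin n))]
  · simp [e, eSign]
  · intro A _ hA; simp [e, hA]
  · simp

lemma eSign_eq (j : Fin n) (C : Finset (Fin n)) :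
    eSign j C = (-1) ^ #(C.filter (· < j)) * (if j ∈ C then 1 else -1) := by
  have hlt : #(({j} ×ˢ symmDiff {j} C).filter fun p => p.2 < p.1) = #(C.filter (· < j)) := by
    rw [singleton_product, filter_map, card_map]
    congr 1
    ext b
    simp only [Function.comp_apply, Function.Embedding.coeFn_mk, mem_filter, mem_symmDiff,
      mem_singleton]
    constructor
    · rintro ⟨⟨rfl, -⟩ | ⟨hb, -⟩, hlt⟩
      exacts [absurd hlt (lt_irrefl _), ⟨hb, hlt⟩]
    · rintro ⟨hb, hlt⟩
      exact ⟨Or.inr ⟨hb, hlt.ne⟩, hlt⟩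
  have hinter : ({j} ∩ symmDiff {j} C) = if j ∈ C then ∅ else {j} := by
    ext b
    by_cases hb : b = j <;> split_ifs <;> simp_all [mem_symmDiff]
  rw [eSign, csign, hlt, hinter]
  split_ifs <;> simp [pow_add]

lemma neg_one_pow_card_singleton_symmDiff (j : Fin n) (D : Finset (Fin n)) :
    (-1 : ℝ) ^ #(symmDiff {j} D) = -(-1) ^ #D := by
  by_cases hj : j ∈ D
  · have hset : symmDiff {j} D = D.erase j := by
      ext b; by_cases hb : b = j <;> simp_all [mem_symmDiff]
    rw [hset, ← card_erase_add_one hj, pow_succ, mul_neg_one, neg_neg]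
  · have hset : symmDiff {j} D = insert j D := by
      ext b; by_cases hb : b = j <;> simp_all [mem_symmDiff]
    rw [hset, card_insert_of_notMem hj, pow_succ, mul_neg_one]

lemma neg_one_pow_card_filter_lt_symmDiff (j k : Fin n) (C : Finset (Fin n)) :
    (-1 : ℝ) ^ #((symmDiff {j} C).filter (· < k)) =
      (if j < k then -1 else 1) * (-1) ^ #(C.filter (· < k)) := by
  split_ifs with hjk
  · have hset : (symmDiff {j} C).filter (· < k) = symmDiff {j} (C.filter (· < k)) := by
      ext b; by_cases hb : b = j <;> simp_all [mem_symmDiff]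
    rw [hset, neg_one_pow_card_singleton_symmDiff, neg_one_mul]
  · have hset : (symmDiff {j} C).filter (· < k) = C.filter (· < k) := by
      ext b; by_cases hb : b = j <;> simp_all [mem_symmDiff]
    rw [hset, one_mul]

lemma e_mul_e_self (j : Fin n) (f : Cl n) : cmul (e j) (cmul (e j) f) = -f := by
  funext C
  rw [Pi.neg_apply, cmul_e_apply, cmul_e_apply, symmDiff_symmDiff_cancel_left, ← mul_assoc,
    eSign_eq, eSign_eq, neg_one_pow_card_filter_lt_symmDiff, if_neg (lt_irrefl j)]
  have hsq : (-1 : ℝ) ^ (#(C.filter (· < j)) * 2) = 1 := Even.neg_one_pow ⟨_, by ring⟩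
  by_cases hj : j ∈ C <;> simp [hj, mem_symmDiff, ← pow_add, ← two_mul, mul_comm 2, hsq]

lemma e_mul_e_comm {j k : Fin n} (h : j ≠ k) (f : Cl n) :
    cmul (e j) (cmul (e k) f) = -cmul (e k) (cmul (e j) f) := by
  funext C
  rw [Pi.neg_apply, cmul_e_apply, cmul_e_apply, cmul_e_apply, cmul_e_apply,
    symmDiff_left_comm, eSign_eq, eSign_eq, eSign_eq, eSign_eq,
    neg_one_pow_card_filter_lt_symmDiff, neg_one_pow_card_filter_lt_symmDiff]
  have hj : j ∈ symmDiff {k} C ↔ j ∈ C := by simp [mem_symmDiff, h]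
  have hk : k ∈ symmDiff {j} C ↔ k ∈ C := by simp [mem_symmDiff, h.symm]
  rcases h.lt_or_gt with hlt | hlt <;> simp [hj, hk, hlt, hlt.not_gt] <;> split_ifs <;> ring

lemma cmul_zero_right (f : Cl n) : cmul f 0 = 0 :=
  map_zero (cmulL f)

lemma cmul_sub_right (f g₁ g₂ : Cl n) : cmul f (g₁ - g₂) = cmul f g₁ - cmul f g₂ :=
  map_sub (cmulL f) g₁ g₂

lemma e_mul_e_add_e_mul_e (j k : Fin n) (f : Cl n) :
    cmul (e j) (cmul (e k) f) + cmul (e k) (cmul (e j) f) = if j = k then (-2 : ℝ) • f else 0 := by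
  split_ifs with h
  · rw [h, e_mul_e_self, neg_smul, two_smul, neg_add]
  · rw [e_mul_e_comm h, neg_add_cancel]

lemma e_mul_vec_add_vec_mul_e (k : Fin n) (x : Fin n → ℝ) (f : Cl n) :
    cmul (e k) (cmul (vec x) f) + cmul (vec x) (cmul (e k) f) = -(2 * x k) • f := by
  simp only [cmul_vec_left, cmul_sum_right, cmul_smul_right, ← sum_add_distrib, ← smul_add,
    e_mul_e_add_e_mul_e, smul_ite, smul_zero, sum_ite_eq, mem_univ, if_true, smul_smul]
  ring_nf

lemma nrm_sq (x : Fin n → ℝ) : nrm x ^ 2 = ∑ j, x j ^ 2 :=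
  Real.sq_sqrt (by positivity)

lemma vec_mul_vec (x : Fin n → ℝ) (f : Cl n) :
    cmul (vec x) (cmul (vec x) f) = -(nrm x ^ 2) • f := by
  have hleft : ∑ k, x k • cmul (e k) (cmul (vec x) f) = cmul (vec x) (cmul (vec x) f) :=
    (cmul_vec_left _ _).symm
  have hright : ∑ k, x k • cmul (vec x) (cmul (e k) f) = cmul (vec x) (cmul (vec x) f) := by
    simp only [cmul_vec_left x f, cmul_sum_right, cmul_smul_right]
  have hsum := sum_congr rfl fun k (_ : k ∈ univ) =>
    congrArg (x k • ·) (e_mul_vec_add_vec_mul_e k x f)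
  simp only [smul_add, sum_add_distrib, hleft, hright, smul_smul, ← sum_smul] at hsum
  refine smul_right_injective _ (two_ne_zero (α := ℝ)) ?_
  simp only [← two_smul ℝ, smul_smul] at hsum ⊢
  rw [hsum, nrm_sq, mul_neg, mul_sum]
  congr 1
  simp only [← sum_neg_distrib]
  exact sum_congr rfl fun k _ => by ring

def vecL : (Fin n → ℝ) →L[ℝ] Cl n :=
  LinearMap.toContinuousLinearMap
    { toFun := vec
      map_add' x y := by simp only [vec, Pi.add_apply, add_smul, sum_add_distrib]
      map_smul' a x := by simp only [vec, Pi.smul_apply, smul_eq_mul, mul_smul, smul_sum,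
        RingHom.id_apply] }

@[simp] lemma vecL_apply (x : Fin n → ℝ) : vecL x = vec x := rfl

lemma vec_single (k : Fin n) : vec (Pi.single k 1) = e k := by
  rw [vec, sum_eq_single k] <;> simp +contextual

lemma fderiv_apply_eq_sum_pd (u : (Fin n → ℝ) → Cl n) (x v : Fin n → ℝ) :
    fderiv ℝ u x v = ∑ k, v k • pd k u x := by
  conv_lhs => rw [← univ_sum_single v]
  simp only [map_sum, pd, ← map_smul, ← Pi.single_smul, smul_eq_mul, mul_one]

lemma dirac_smul {φ : (Fin n → ℝ) → ℝ} {u : (Fin n → ℝ) → Cl n} {x : Fin n → ℝ}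
    (hφ : DifferentiableAt ℝ φ x) (hu : DifferentiableAt ℝ u x) :
    Dirac (fun y => φ y • u y) x = φ x • Dirac u x + cmul (Dgrad φ x) (u x) := by
  have hpd (k : Fin n) : pd k (fun y => φ y • u y) x = φ x • pd k u x + pds k φ x • u x := by
    simp [pd, pds, fderiv_fun_smul hφ hu]
  simp only [Dirac, hpd, cmul_add_right, cmul_smul_right, sum_add_distrib, ← smul_sum, Dgrad,
    cmul_vec_left]

lemma differentiableAt_vec_cmul {u : (Fin n → ℝ) → Cl n} {x : Fin n → ℝ}
    (hu : DifferentiableAt ℝ u x) : DifferentiableAt ℝ (fun y => cmul (vec y) (u y)) x :=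
  (cmulL.comp vecL).differentiableAt.clm_apply hu

lemma dirac_vec_cmul {u : (Fin n → ℝ) → Cl n} {x : Fin n → ℝ} (hu : DifferentiableAt ℝ u x) :
    Dirac (fun y => cmul (vec y) (u y)) x =
      -((n : ℝ) • u x) - cmul (vec x) (Dirac u x) - (2 : ℝ) • fderiv ℝ u x x := by
  have hpd (k : Fin n) :
      pd k (fun y => cmul (vec y) (u y)) x = cmul (e k) (u x) + cmul (vec x) (pd k u x) := by
    have h := (cmulL.comp vecL).hasFDerivAt.clm_apply hu.hasFDerivAt
    rw [pd, show fderiv ℝ (fun y => cmul (vec y) (u y)) x = _ from h.fderiv]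
    simp [vec_single, pd, add_comm]
  have hterm (k : Fin n) : cmul (e k) (pd k (fun y => cmul (vec y) (u y)) x) =
      -u x - cmul (vec x) (cmul (e k) (pd k u x)) - (2 * x k) • pd k u x := by
    rw [hpd, cmul_add_right, e_mul_e_self, eq_sub_of_add_eq (e_mul_vec_add_vec_mul_e k x _),
      neg_smul]
    abel
  simp only [Dirac, hterm, sum_sub_distrib, sum_neg_distrib, ← cmul_sum_right,
    fderiv_apply_eq_sum_pd u x x, smul_sum, smul_smul, sum_const, card_univ, Fintype.card_fin,
    ← Nat.cast_smul_eq_nsmul ℝ]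

def dotL (x : Fin n → ℝ) : (Fin n → ℝ) →L[ℝ] ℝ := ∑ j, x j • ContinuousLinearMap.proj j

@[simp] lemma dotL_apply (x v : Fin n → ℝ) : dotL x v = ∑ j, x j * v j := by
  simp [dotL]

lemma dotL_self (x : Fin n → ℝ) : dotL x x = nrm x ^ 2 := by
  rw [dotL_apply, nrm_sq]
  simp only [sq]

lemma nrm_nonneg (x : Fin n → ℝ) : 0 ≤ nrm x := Real.sqrt_nonneg _

lemma nrm_ne_zero {x : Fin n → ℝ} (hx : x ≠ 0) : nrm x ≠ 0 := by
  obtain ⟨j, hj⟩ := Function.ne_iff.1 hx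
  have hj : x j ≠ 0 := hj
  refine (Real.sqrt_pos.2 (sum_pos' (fun i _ => sq_nonneg _) ⟨j, mem_univ j, ?_⟩)).ne'
  positivity

lemma hasFDerivAt_nrm_sq (x : Fin n → ℝ) :
    HasFDerivAt (fun y => nrm y ^ 2) ((2 : ℝ) • dotL x) x := by
  have h : HasFDerivAt (fun y : Fin n → ℝ => ∑ j, y j ^ 2)
      (∑ j, (2 * x j) • ContinuousLinearMap.proj j) x :=
    HasFDerivAt.fun_sum fun j _ => by
      simpa using ((ContinuousLinearMap.proj (R := ℝ) (φ := fun _ : Fin n => ℝ) j).hasFDerivAt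
        (x := x)).pow 2
  simp only [nrm_sq]
  refine h.congr_fderiv ?_
  ext v
  simp [dotL, mul_sum, mul_assoc]

lemma hasFDerivAt_nrm {x : Fin n → ℝ} (hx : x ≠ 0) :
    HasFDerivAt nrm ((nrm x)⁻¹ • dotL x) x := by
  have h := (hasFDerivAt_nrm_sq x).sqrt (pow_ne_zero 2 (nrm_ne_zero hx))
  simp only [Real.sqrt_sq, nrm_nonneg, smul_smul] at h
  refine h.congr_fderiv ?_
  congr 1
  field_simp

lemma hasFDerivAt_nrm_pow_inv {x : Fin n → ℝ} (hx : x ≠ 0) (m : ℕ) :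
    HasFDerivAt (fun y => (nrm y ^ m)⁻¹) (-(m * (nrm x ^ (m + 2))⁻¹) • dotL x) x := by
  have hN := nrm_ne_zero hx
  refine (((hasDerivAt_pow m (nrm x)).inv (pow_ne_zero m hN)).comp_hasFDerivAt x
    (hasFDerivAt_nrm hx)).congr_fderiv ?_
  rw [smul_smul]
  congr 1
  rcases m with _ | m
  · simp
  · rw [Nat.add_sub_cancel]
    field_simp
    ring

lemma dgrad_nrm_pow_inv {x : Fin n → ℝ} (hx : x ≠ 0) (m : ℕ) :
    Dgrad (fun y => (nrm y ^ m)⁻¹) x = -(m * (nrm x ^ (m + 2))⁻¹) • vec x := by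
  simp only [Dgrad, pds, (hasFDerivAt_nrm_pow_inv hx m).fderiv, ← vecL_apply, ← map_smul]
  congr 1
  ext j
  simp [Pi.single_apply]

def inversion (x : Fin n → ℝ) : Fin n → ℝ := (nrm x ^ 2)⁻¹ • x

lemma hasFDerivAt_inversion {x : Fin n → ℝ} (hx : x ≠ 0) :
    HasFDerivAt inversion ((nrm x ^ 2)⁻¹ • ContinuousLinearMap.id ℝ _ -
      (2 * ((nrm x ^ 2) ^ 2)⁻¹) • (dotL x).smulRight x) x := by
  refine (((hasDerivAt_inv (pow_ne_zero 2 (nrm_ne_zero hx))).comp_hasFDerivAt x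
    (hasFDerivAt_nrm_sq x)).smul (hasFDerivAt_id x)).congr_fderiv ?_
  ext v j
  simp
  ring

lemma fderiv_inversion_apply {x : Fin n → ℝ} (hx : x ≠ 0) (v : Fin n → ℝ) :
    fderiv ℝ inversion x v = (nrm x ^ 2)⁻¹ • v - (2 * dotL x v * ((nrm x ^ 2) ^ 2)⁻¹) • x := by
  rw [(hasFDerivAt_inversion hx).fderiv]
  simp only [sub_apply, smul_apply, ContinuousLinearMap.id_apply,
    ContinuousLinearMap.smulRight_apply, smul_smul]
  ring_nf

variable {g : (Fin n → ℝ) → Cl n} {x : Fin n → ℝ}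

lemma dirac_comp_inversion (hx : x ≠ 0) (hg : DifferentiableAt ℝ g (inversion x)) :
    Dirac (fun y => g (inversion y)) x = (nrm x ^ 2)⁻¹ • Dirac g (inversion x) -
      (2 * ((nrm x ^ 2) ^ 2)⁻¹) • cmul (vec x) (fderiv ℝ g (inversion x) x) := by
  have hpd (k : Fin n) : pd k (fun y => g (inversion y)) x =
      (nrm x ^ 2)⁻¹ • pd k g (inversion x) -
        (2 * x k * ((nrm x ^ 2) ^ 2)⁻¹) • fderiv ℝ g (inversion x) x := by
    simp [pd, fderiv_fun_comp x hg (hasFDerivAt_inversion hx).differentiableAt,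
      fderiv_inversion_apply hx, Pi.single_apply]
  simp only [Dirac, hpd, cmul_sub_right, cmul_smul_right, sum_sub_distrib, ← smul_sum,
    cmul_vec_left]
  congr 1
  rw [smul_sum]
  exact sum_congr rfl fun k _ => by rw [smul_smul, mul_right_comm]

lemma fderiv_comp_inversion_apply_self (hx : x ≠ 0) (hg : DifferentiableAt ℝ g (inversion x)) :
    fderiv ℝ (fun y => g (inversion y)) x x = -(nrm x ^ 2)⁻¹ • fderiv ℝ g (inversion x) x := by
  have hN := pow_ne_zero 2 (nrm_ne_zero hx)
  rw [fderiv_fun_comp x hg (hasFDerivAt_inversion hx).differentiableAt,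
    ContinuousLinearMap.comp_apply, fderiv_inversion_apply hx, dotL_self, ← map_smul]
  congr 1
  rw [← sub_smul]
  congr 1
  field_simp
  ring

lemma dirac_vec_cmul_comp_inversion (hx : x ≠ 0) (hg : DifferentiableAt ℝ g (inversion x)) :
    Dirac (fun y => cmul (vec y) (g (inversion y))) x =
      -((n : ℝ) • g (inversion x)) - (nrm x ^ 2)⁻¹ • cmul (vec x) (Dirac g (inversion x)) := by
  have hN := pow_ne_zero 2 (nrm_ne_zero hx)
  rw [dirac_vec_cmul (u := fun y => g (inversion y))
      (hg.comp x (hasFDerivAt_inversion hx).differentiableAt),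
    dirac_comp_inversion hx hg, fderiv_comp_inversion_apply_self hx hg]
  simp only [cmul_sub_right, cmul_smul_right, vec_mul_vec]
  match_scalars <;> field_simp
  ring

theorem dirac_kelvin (hx : x ≠ 0) (hg : DifferentiableAt ℝ g (inversion x)) :
    Dirac (fun y => (nrm y ^ n)⁻¹ • cmul (vec y) (g (inversion y))) x =
      -((nrm x ^ (n + 2))⁻¹ • cmul (vec x) (Dirac g (inversion x))) := by
  have hN := nrm_ne_zero hx
  rw [dirac_smul (hasFDerivAt_nrm_pow_inv hx n).differentiableAt
    (differentiableAt_vec_cmul (u := fun y => g (inversion y))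
      (hg.comp x (hasFDerivAt_inversion hx).differentiableAt)),
    dirac_vec_cmul_comp_inversion hx hg, dgrad_nrm_pow_inv hx, cmul_smul_left, vec_mul_vec]
  match_scalars <;> field_simp <;> ring

end Cliff

theorem dirac_kelvin_transform_general (n : ℕ)
    (U : Set (Fin n → ℝ)) (hU : IsOpen U)
    (g : (Fin n → ℝ) → Cl n) (hg : ContDiffOn ℝ 1 g U)
    (K : (Fin n → ℝ) → Cl n)
    (hK : K = fun x => (Cliff.nrm x ^ n)⁻¹ •
      Cliff.cmul (Cliff.vec x) (g ((Cliff.nrm x ^ 2)⁻¹ • x))) :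
    (∀ x : Fin n → ℝ, x ≠ 0 → (Cliff.nrm x ^ 2)⁻¹ • x ∈ U →
      Cliff.Dirac K x =
        -((Cliff.nrm x ^ (n + 2))⁻¹ •
          Cliff.cmul (Cliff.vec x)
            (Cliff.Dirac g ((Cliff.nrm x ^ 2)⁻¹ • x)))) ∧
    ((∀ y ∈ U, Cliff.Dirac g y = 0) →
      ∀ x : Fin n → ℝ, x ≠ 0 → (Cliff.nrm x ^ 2)⁻¹ • x ∈ U →
        Cliff.Dirac K x = 0) := by
  have kelvin (x : Fin n → ℝ) (hx : x ≠ 0) (hxU : Cliff.inversion x ∈ U) :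
      Cliff.Dirac K x = -((Cliff.nrm x ^ (n + 2))⁻¹ •
        Cliff.cmul (Cliff.vec x) (Cliff.Dirac g (Cliff.inversion x))) := by
    subst hK
    exact Cliff.dirac_kelvin hx ((hg.contDiffAt (hU.mem_nhds hxU)).differentiableAt one_ne_zero)
  refine ⟨kelvin, fun hDg x hx hxU => ?_⟩
  rw [kelvin x hx hxU, hDg (Cliff.inversion x) hxU, Cliff.cmul_zero_right, smul_zero, neg_zero]

/-- the Kelvin transform identity. For `g ∈ C¹(U, ℝ_n)` with
`U ⊆ ℝⁿ ∖ {0}` open and `K(x) = (x/|x|ⁿ) g(x/|x|²)`, for every `x` in the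
inverted set `I(U)` one has `D K(x) = −(x/|x|^{n+2}) (Dg)(x/|x|²)`; in
particular, if `Dg = 0` on `U` then `K` is left monogenic on `I(U)`. -/
theorem dirac_kelvin_transform (n : ℕ) (hn : 2 ≤ n)
    (U : Set (Fin n → ℝ)) (hU : IsOpen U) (hU0 : ∀ x ∈ U, x ≠ 0)
    (g : (Fin n → ℝ) → Cl n) (hg : ContDiffOn ℝ 1 g U)
    (K : (Fin n → ℝ) → Cl n)
    (hK : K = fun x => (Cliff.nrm x ^ n)⁻¹ •
      Cliff.cmul (Cliff.vec x) (g ((Cliff.nrm x ^ 2)⁻¹ • x))) :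
    (∀ x : Fin n → ℝ, x ≠ 0 → (Cliff.nrm x ^ 2)⁻¹ • x ∈ U →
      Cliff.Dirac K x =
        -((Cliff.nrm x ^ (n + 2))⁻¹ •
          Cliff.cmul (Cliff.vec x)
            (Cliff.Dirac g ((Cliff.nrm x ^ 2)⁻¹ • x)))) ∧
    ((∀ y ∈ U, Cliff.Dirac g y = 0) →
      ∀ x : Fin n → ℝ, x ≠ 0 → (Cliff.nrm x ^ 2)⁻¹ • x ∈ U →
        Cliff.Dirac K x = 0) :=
  dirac_kelvin_transform_general n U hU g hg K hK
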